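/- arXiv:2304.11494 — 2 statements merged into one kernel-verified Lean document; each statement's English description precedes it below -/
import Mathlib

section
/- For a marriage market with n ≥ 3 men and n women, there is no stable and strategy-proof matching rule on the maximal tree-single-peaked domain S(T_W)^n × S(T_M)^n, where T_W is any tree on the women and T_M any tree on the men. -/
/-- `r` is a (strict) preference, i.e., a strict total order. -/
def IsPref {X : Type*} (r : X → X → Prop) : Prop := IsStrictTotalOrder X r

/-- `x` is the top (most preferred) element of `r`. -/
def TopOf {X : Type*} (r : X → X → Prop) (x : X) : Prop := ∀ y, y ≠ x → r x y

/-- `a` lies on the (unique) path from `x` to `y` in `G`. -/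
def OnPath {X : Type*} (G : SimpleGraph X) (a x y : X) : Prop :=
  ∀ p : G.Walk x y, p.IsPath → a ∈ p.support

/-- Single-peakedness with respect to a tree `G`. -/
def SPTree {X : Type*} (G : SimpleGraph X) (r : X → X → Prop) : Prop :=
  ∀ t a b, TopOf r t → OnPath G a t b → a = b ∨ r a b

/-- Classical single-peakedness with respect to a strict linear order `lt`. -/
def SPLine {X : Type*} (lt r : X → X → Prop) : Prop :=
  ∀ t x y, TopOf r t → (((x = t ∨ lt t x) ∧ lt x y) ∨ (lt y x ∧ (x = t ∨ lt x t))) → r x y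

/-- Richness: every alternative is the top of some admissible preference. -/
def Rich {X : Type*} (D : Set (X → X → Prop)) : Prop := ∀ x, ∃ P ∈ D, TopOf P x

/-- Top dominance property. -/
def TD {X : Type*} (D : Set (X → X → Prop)) : Prop :=
  ∀ x y z : X, (∃ P ∈ D, P x y ∧ P y z) → ¬ ∃ P ∈ D, P x z ∧ P z y

/-- Rotation property. -/
def Rotation {X : Type*} (D : Set (X → X → Prop)) : Prop :=
  ∀ x y z t : X, (∃ P ∈ D, P x y ∧ P y z ∧ P z t) → ¬ ∃ P ∈ D, P z x ∧ P x t

/-- `G` is a path graph (linear tree) on `k` vertices. -/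
def IsPathG {X : Type*} (G : SimpleGraph X) (k : ℕ) : Prop :=
  ∃ e : X ≃ Fin k, ∀ a b, G.Adj a b ↔ ((e a : ℕ) + 1 = e b ∨ (e b : ℕ) + 1 = e a)

/-- `G` is a star graph: some center adjacent to all other vertices, no other edges. -/
def IsStarG {X : Type*} (G : SimpleGraph X) : Prop :=
  ∃ c, ∀ a b, G.Adj a b ↔ a ≠ b ∧ (a = c ∨ b = c)

/-- A preference relation over the `n` agents of the opposite side. -/
abbrev PrefRel (n : ℕ) := Fin n → Fin n → Prop

/-- A preference profile: one preference (over women) per man, one (over men) per woman. -/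
abbrev Profile (n : ℕ) := (Fin n → PrefRel n) × (Fin n → PrefRel n)

/-- Membership in the anonymous product domain with men's set `Dm` and women's set `Dw`. -/
def InDomain {n : ℕ} (Dm Dw : Set (PrefRel n)) (p : Profile n) : Prop :=
  (∀ m, p.1 m ∈ Dm) ∧ (∀ w, p.2 w ∈ Dw)

/-- Pair `(m, w)` blocks matching `μ` at profile `p`. -/
def Blocks {n : ℕ} (p : Profile n) (μ : Fin n ≃ Fin n) (m w : Fin n) : Prop :=
  p.1 m w (μ m) ∧ p.2 w m (μ.symm w)

/-- Matching `μ` is stable at profile `p`. -/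
def StableAt {n : ℕ} (p : Profile n) (μ : Fin n ≃ Fin n) : Prop := ∀ m w, ¬ Blocks p μ m w

/-- The matching rule `φ` is stable on the domain. -/
def StableRule {n : ℕ} (Dm Dw : Set (PrefRel n)) (φ : Profile n → (Fin n ≃ Fin n)) : Prop :=
  ∀ p, InDomain Dm Dw p → StableAt p (φ p)

/-- Strategy-proofness on the domain: no unilateral in-domain misreport gives a strictly
better match. -/
def SP {n : ℕ} (Dm Dw : Set (PrefRel n)) (φ : Profile n → (Fin n ≃ Fin n)) : Prop :=
  ∀ p, InDomain Dm Dw p →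
    (∀ m P', P' ∈ Dm → ¬ p.1 m (φ (Function.update p.1 m P', p.2) m) (φ p m)) ∧
    (∀ w P', P' ∈ Dw → ¬ p.2 w ((φ (p.1, Function.update p.2 w P')).symm w) ((φ p).symm w))

/-- Non-bossiness: a unilateral report change leaving one's own match unchanged leaves the
whole matching unchanged. -/
def NonBossy {n : ℕ} (Dm Dw : Set (PrefRel n)) (φ : Profile n → (Fin n ≃ Fin n)) : Prop :=
  ∀ p, InDomain Dm Dw p →
    (∀ m P', P' ∈ Dm → φ (Function.update p.1 m P', p.2) m = φ p m →
       φ (Function.update p.1 m P', p.2) = φ p) ∧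
    (∀ w P', P' ∈ Dw → (φ (p.1, Function.update p.2 w P')).symm w = (φ p).symm w →
       φ (p.1, Function.update p.2 w P') = φ p)

/-- Man `m` is weakly better off under `μ'` than under `μ` (true preferences from `p`). -/
def MWeakBetter {n : ℕ} (p : Profile n) (μ μ' : Fin n ≃ Fin n) (m : Fin n) : Prop :=
  μ' m = μ m ∨ p.1 m (μ' m) (μ m)

/-- Woman `w` is weakly better off under `μ'` than under `μ`. -/
def WWeakBetter {n : ℕ} (p : Profile n) (μ μ' : Fin n ≃ Fin n) (w : Fin n) : Prop :=
  μ'.symm w = μ.symm w ∨ p.2 w (μ'.symm w) (μ.symm w)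

/-- Group strategy-proofness on the domain. -/
def GSP {n : ℕ} (Dm Dw : Set (PrefRel n)) (φ : Profile n → (Fin n ≃ Fin n)) : Prop :=
  ∀ p, InDomain Dm Dw p →
    ¬ ∃ (p' : Profile n) (S : Set (Fin n ⊕ Fin n)),
      InDomain Dm Dw p' ∧
      (∀ m, Sum.inl m ∉ S → p'.1 m = p.1 m) ∧
      (∀ w, Sum.inr w ∉ S → p'.2 w = p.2 w) ∧
      (∀ m, Sum.inl m ∈ S → MWeakBetter p (φ p) (φ p') m) ∧
      (∀ w, Sum.inr w ∈ S → WWeakBetter p (φ p) (φ p') w) ∧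
      ((∃ m, Sum.inl m ∈ S ∧ p.1 m (φ p' m) (φ p m)) ∨
       (∃ w, Sum.inr w ∈ S ∧ p.2 w ((φ p').symm w) ((φ p).symm w)))


section Aux13

open SimpleGraph

variable {n : ℕ}

/-- Tie-break function favoring `fav`. -/
def tbk (fav v : Fin n) : ℕ := if v = fav then 0 else (v : ℕ) + 1

lemma tbk_inj {fav v w : Fin n} (h : tbk fav v = tbk fav w) : v = w := by
  rcases eq_or_ne v fav with h1 | h1 <;> rcases eq_or_ne w fav with h2 | h2
  · rw [h1, h2]
  · simp only [tbk, if_pos h1, if_neg h2] at h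
    omega
  · simp only [tbk, if_neg h1, if_pos h2] at h
    omega
  · simp only [tbk, if_neg h1, if_neg h2] at h
    exact Fin.ext (by omega)

/-- A "BFS from `t`" strict total order: closer to `t` is better, ties broken
favoring `fav` and then by index. -/
def dOrd (G : SimpleGraph (Fin n)) (t fav : Fin n) : PrefRel n := fun v w =>
  G.dist t v < G.dist t w ∨ (G.dist t v = G.dist t w ∧ tbk fav v < tbk fav w)

lemma dOrd_isPref (G : SimpleGraph (Fin n)) (t fav : Fin n) : IsPref (dOrd G t fav) := by
  refine { trichotomous := ?_, irrefl := ?_, trans := ?_ }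
  · -- trichotomous
    intro v w h1 h2
    by_contra hvw
    have h : tbk fav v ≠ tbk fav w := fun h => hvw (tbk_inj h)
    unfold dOrd at h1 h2
    omega
  · -- irrefl
    intro v
    unfold dOrd
    omega
  · -- trans
    intro u v w huv hvw
    unfold dOrd at *
    omega

lemma dOrd_asymm {G : SimpleGraph (Fin n)} {t fav v w : Fin n}
    (h1 : dOrd G t fav v w) (h2 : dOrd G t fav w v) : False := by
  unfold dOrd at *
  omega

lemma dOrd_top {G : SimpleGraph (Fin n)} (hc : G.Connected) (t fav : Fin n) :
    TopOf (dOrd G t fav) t := by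
  intro v hv
  left
  rw [SimpleGraph.dist_self]
  exact hc.pos_dist_of_ne (fun h => hv h.symm)

lemma dOrd_sptree {G : SimpleGraph (Fin n)} (hc : G.Connected) (t fav : Fin n) :
    SPTree G (dOrd G t fav) := by
  intro s v b htop hpath
  have hst : s = t := by
    by_contra h
    exact dOrd_asymm (htop t fun e => h e.symm) ((dOrd_top hc t fav) s h)
  subst hst
  by_cases hvb : v = b
  · exact Or.inl hvb
  · right
    obtain ⟨p, hp, hlen⟩ := hc.exists_path_of_dist s b
    have hv : v ∈ p.support := hpath p hp
    have h1 : G.dist s v ≤ (p.takeUntil v hv).length := SimpleGraph.dist_le _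
    have h2 : (p.takeUntil v hv).length + (p.dropUntil v hv).length = p.length := by
      have := congrArg Walk.length (p.take_spec hv)
      rwa [Walk.length_append] at this
    have h3 : (p.dropUntil v hv).length ≠ 0 :=
      fun h0 => hvb (Walk.eq_of_length_eq_zero h0)
    left
    omega

lemma dOrd_mem {G : SimpleGraph (Fin n)} (hc : G.Connected) (t fav : Fin n) :
    dOrd G t fav ∈ {r : PrefRel n | IsPref r ∧ SPTree G r} :=
  ⟨dOrd_isPref G t fav, dOrd_sptree hc t fav⟩

lemma dOrd_lt1 {G : SimpleGraph (Fin n)} {t v w : Fin n} (fav : Fin n)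
    (h : G.dist t v < G.dist t w) : dOrd G t fav v w := Or.inl h

lemma dOrd_fav {G : SimpleGraph (Fin n)} {t fav w : Fin n}
    (h : G.dist t fav = G.dist t w) (hw : w ≠ fav) : dOrd G t fav fav w := by
  refine Or.inr ⟨h, ?_⟩
  unfold tbk
  rw [if_pos rfl, if_neg hw]
  omega

/-- Every tree on at least 3 vertices has a path on 3 vertices. -/
lemma exists_two_adj {G : SimpleGraph (Fin n)} (hG : G.IsTree) (hn : 3 ≤ n) :
    ∃ x y z : Fin n, G.Adj x y ∧ G.Adj y z ∧ x ≠ z := by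
  classical
  have hcard : G.edgeFinset.card + 1 = n := by
    have := hG.card_edgeFinset
    simpa using this
  have hsum : ∑ v : Fin n, G.degree v = 2 * G.edgeFinset.card :=
    G.sum_degrees_eq_twice_card_edges
  have hdeg : ∃ y : Fin n, 2 ≤ G.degree y := by
    by_contra h
    push_neg at h
    have hle : ∑ v : Fin n, G.degree v ≤ ∑ _v : Fin n, 1 :=
      Finset.sum_le_sum (fun i _ => by have := h i; omega)
    simp only [Finset.sum_const, Finset.card_univ, Fintype.card_fin, smul_eq_mul, mul_one] at hle
    omega
  obtain ⟨y, hy⟩ := hdeg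
  have hy' : 1 < (G.neighborFinset y).card := by
    rw [SimpleGraph.card_neighborFinset_eq_degree]
    omega
  obtain ⟨u, hu, v, hv, huv⟩ := Finset.one_lt_card.mp hy'
  exact ⟨u, y, v, ((G.mem_neighborFinset y u).mp hu).symm, (G.mem_neighborFinset y v).mp hv, huv⟩

lemma dist_two {G : SimpleGraph (Fin n)} (hG : G.IsTree) {x y z : Fin n}
    (hxy : G.Adj x y) (hyz : G.Adj y z) (hxz : x ≠ z) : G.dist x z = 2 := by
  have hnadj : ¬ G.Adj x z := by
    intro hadj
    have h1 : (Walk.cons hadj Walk.nil).IsPath := by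
      simp [Walk.cons_isPath_iff, hxz]
    have h2 : (Walk.cons hxy (Walk.cons hyz Walk.nil)).IsPath := by
      simp [Walk.cons_isPath_iff, hxy.ne, hxz, hyz.ne]
    obtain ⟨p, -, huniq⟩ := hG.existsUnique_path x z
    have e1 := huniq _ h1
    have e2 := huniq _ h2
    have e3 := e1.trans e2.symm
    have hl := congrArg Walk.length e3
    simp [Walk.length_cons] at hl
  have hub : G.dist x z ≤ 2 := by
    have := SimpleGraph.dist_le (Walk.cons hxy (Walk.cons hyz Walk.nil))
    simpa using this
  have h0 : 0 < G.dist x z := hG.isConnected.pos_dist_of_ne hxz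
  have h1 : G.dist x z ≠ 1 := fun h => hnadj (SimpleGraph.dist_eq_one_iff_adj.mp h)
  omega

lemma exists_perm_triple {a b c x y z : Fin n} (hab : a ≠ b) (hac : a ≠ c) (hbc : b ≠ c)
    (hxy : x ≠ y) (hxz : x ≠ z) (hyz : y ≠ z) :
    ∃ π : Equiv.Perm (Fin n), π a = x ∧ π b = y ∧ π c = z := by
  classical
  refine ⟨Equiv.extendSubtype
    (⟨fun v => if v.1 = a then ⟨x, Or.inl rfl⟩ else if v.1 = b then ⟨y, Or.inr (Or.inl rfl)⟩
        else ⟨z, Or.inr (Or.inr rfl)⟩,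
      fun w => if w.1 = x then ⟨a, Or.inl rfl⟩ else if w.1 = y then ⟨b, Or.inr (Or.inl rfl)⟩
        else ⟨c, Or.inr (Or.inr rfl)⟩, ?_, ?_⟩ :
      {v : Fin n // v = a ∨ v = b ∨ v = c} ≃ {v : Fin n // v = x ∨ v = y ∨ v = z}),
    ?_, ?_, ?_⟩
  · rintro ⟨v, rfl | rfl | rfl⟩ <;>
      simp [hab, hac, hbc, hxy, hxz, hyz, Ne.symm hab, Ne.symm hac, Ne.symm hbc,
        Ne.symm hxy, Ne.symm hxz, Ne.symm hyz]
  · rintro ⟨w, rfl | rfl | rfl⟩ <;>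
      simp [hab, hac, hbc, hxy, hxz, hyz, Ne.symm hab, Ne.symm hac, Ne.symm hbc,
        Ne.symm hxy, Ne.symm hxz, Ne.symm hyz]
  · rw [Equiv.extendSubtype_apply_of_mem _ a (Or.inl rfl)]
    simp
  · rw [Equiv.extendSubtype_apply_of_mem _ b (Or.inr (Or.inl rfl))]
    simp [Ne.symm hab]
  · rw [Equiv.extendSubtype_apply_of_mem _ c (Or.inr (Or.inr rfl))]
    simp [Ne.symm hac, Ne.symm hbc]

end Aux13

/-- no stable and strategy-proof matching rule on the maximal
tree-single-peaked domain. -/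
theorem stmt13 {n : ℕ} (hn : 3 ≤ n)
    (Gw : SimpleGraph (Fin n)) (hGw : Gw.IsTree)
    (Gm : SimpleGraph (Fin n)) (hGm : Gm.IsTree) :
    ¬ ∃ φ : Profile n → (Fin n ≃ Fin n),
        StableRule {r : PrefRel n | IsPref r ∧ SPTree Gw r}
            {r : PrefRel n | IsPref r ∧ SPTree Gm r} φ ∧
        SP {r : PrefRel n | IsPref r ∧ SPTree Gw r}
            {r : PrefRel n | IsPref r ∧ SPTree Gm r} φ := by
  rintro ⟨φ, hStable, hSP⟩
  have hcw : Gw.Connected := hGw.isConnected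
  have hcm : Gm.Connected := hGm.isConnected
  obtain ⟨x, y, z, wadj1, wadj2, hxz⟩ := exists_two_adj hGw hn
  obtain ⟨a, b, c, madj1, madj2, hac⟩ := exists_two_adj hGm hn
  have hxy : x ≠ y := wadj1.ne
  have hyz : y ≠ z := wadj2.ne
  have hab : a ≠ b := madj1.ne
  have hbc : b ≠ c := madj2.ne
  obtain ⟨π, hπa, hπb, hπc⟩ := exists_perm_triple hab hac hbc hxy hxz hyz
  -- distance facts
  have dwxy : Gw.dist x y = 1 := SimpleGraph.dist_eq_one_iff_adj.mpr wadj1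
  have dwyx : Gw.dist y x = 1 := SimpleGraph.dist_eq_one_iff_adj.mpr wadj1.symm
  have dwyz : Gw.dist y z = 1 := SimpleGraph.dist_eq_one_iff_adj.mpr wadj2
  have dwxz : Gw.dist x z = 2 := dist_two hGw wadj1 wadj2 hxz
  have dmcb : Gm.dist c b = 1 := SimpleGraph.dist_eq_one_iff_adj.mpr madj2.symm
  have dmba : Gm.dist b a = 1 := SimpleGraph.dist_eq_one_iff_adj.mpr madj1.symm
  have dmbc : Gm.dist b c = 1 := SimpleGraph.dist_eq_one_iff_adj.mpr madj2
  have dmca : Gm.dist c a = 2 := dist_two hGm madj2.symm madj1.symm (Ne.symm hac)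
  -- preference comparison facts
  have cA_xy : dOrd Gw x x x y := dOrd_lt1 x (by rw [SimpleGraph.dist_self, dwxy]; omega)
  have cA_xz : dOrd Gw x x x z := dOrd_lt1 x (by rw [SimpleGraph.dist_self, dwxz]; omega)
  have cA_yz : dOrd Gw x x y z := dOrd_lt1 x (by rw [dwxy, dwxz]; omega)
  have cC_yx : dOrd Gw y x y x := dOrd_lt1 x (by rw [SimpleGraph.dist_self, dwyx]; omega)
  have cC_xz : dOrd Gw y x x z := dOrd_fav (by rw [dwyx, dwyz]) (Ne.symm hxz)
  have cC'_yz : dOrd Gw y z y z := dOrd_lt1 z (by rw [SimpleGraph.dist_self, dwyz]; omega)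
  have cC'_zx : dOrd Gw y z z x := dOrd_fav (by rw [dwyz, dwyx]) hxz
  have cX_cb : dOrd Gm c c c b := dOrd_lt1 c (by rw [SimpleGraph.dist_self, dmcb]; omega)
  have cX_ba : dOrd Gm c c b a := dOrd_lt1 c (by rw [dmcb, dmca]; omega)
  have cYZ_bc : dOrd Gm b c b c := dOrd_lt1 c (by rw [SimpleGraph.dist_self, dmbc]; omega)
  have cYZ_ba : dOrd Gm b c b a := dOrd_lt1 c (by rw [SimpleGraph.dist_self, dmba]; omega)
  have cYZ_ca : dOrd Gm b c c a := dOrd_fav (by rw [dmbc, dmba]) hac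
  have cY'_ba : dOrd Gm b a b a := dOrd_lt1 a (by rw [SimpleGraph.dist_self, dmba]; omega)
  have cY'_ac : dOrd Gm b a a c := dOrd_fav (by rw [dmba, dmbc]) (Ne.symm hac)
  -- helpers
  have symm_of : ∀ (μ : Fin n ≃ Fin n) (u v : Fin n), μ u = v → μ.symm v = u := by
    intro μ u v h
    rw [← h, Equiv.symm_apply_apply]
  have inj2 : ∀ (μ : Fin n ≃ Fin n) (u v : Fin n), u ≠ v → μ u ≠ μ v :=
    fun μ u v h he => h (μ.injective he)
  have hπxa : π.symm x = a := symm_of π a x hπa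
  have hπyb : π.symm y = b := symm_of π b y hπb
  have hπzc : π.symm z = c := symm_of π c z hπc
  -- the profile P = (M1, W1)
  obtain ⟨M1, hM1a, hM1b, hM1c, hM1f⟩ :
      ∃ M : Fin n → PrefRel n, M a = dOrd Gw x x ∧ M b = dOrd Gw x x ∧ M c = dOrd Gw y x ∧
        ∀ m, m ≠ a → m ≠ b → m ≠ c → M m = dOrd Gw (π m) (π m) := by
    refine ⟨Function.update (Function.update (Function.update
        (fun m => dOrd Gw (π m) (π m)) a (dOrd Gw x x)) b (dOrd Gw x x)) c (dOrd Gw y x),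
      ?_, ?_, ?_, ?_⟩
    · rw [Function.update_of_ne hac, Function.update_of_ne hab, Function.update_self]
    · rw [Function.update_of_ne hbc, Function.update_self]
    · rw [Function.update_self]
    · intro m hma hmb hmc
      rw [Function.update_of_ne hmc, Function.update_of_ne hmb, Function.update_of_ne hma]
  obtain ⟨W1, hW1x, hW1y, hW1z, hW1f⟩ :
      ∃ W : Fin n → PrefRel n, W x = dOrd Gm c c ∧ W y = dOrd Gm b c ∧ W z = dOrd Gm b c ∧
        ∀ w, w ≠ x → w ≠ y → w ≠ z → W w = dOrd Gm (π.symm w) (π.symm w) := by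
    refine ⟨Function.update (Function.update (Function.update
        (fun w => dOrd Gm (π.symm w) (π.symm w)) x (dOrd Gm c c)) y (dOrd Gm b c)) z
        (dOrd Gm b c), ?_, ?_, ?_, ?_⟩
    · rw [Function.update_of_ne hxz, Function.update_of_ne hxy, Function.update_self]
    · rw [Function.update_of_ne hyz, Function.update_self]
    · rw [Function.update_self]
    · intro w hwx hwy hwz
      rw [Function.update_of_ne hwz, Function.update_of_ne hwy, Function.update_of_ne hwx]
  -- structure of stable matchings: fixed agents are matched along π, actives stay inside
  have structKey : ∀ (Mp Wp : Fin n → PrefRel n),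
      (∀ m, m ≠ a → m ≠ b → m ≠ c → Mp m = dOrd Gw (π m) (π m)) →
      (∀ w, w ≠ x → w ≠ y → w ≠ z → Wp w = dOrd Gm (π.symm w) (π.symm w)) →
      ∀ μ : Fin n ≃ Fin n, StableAt (Mp, Wp) μ →
        (μ a = x ∨ μ a = y ∨ μ a = z) ∧ (μ b = x ∨ μ b = y ∨ μ b = z) ∧
          (μ c = x ∨ μ c = y ∨ μ c = z) := by
    intro Mp Wp hMf hWf μ hst
    have hfix : ∀ m, m ≠ a → m ≠ b → m ≠ c → μ m = π m := by
      intro m hma hmb hmc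
      by_contra hne
      have h1 : π m ≠ x := fun h => hma (by
        have h' := congrArg π.symm h
        rwa [Equiv.symm_apply_apply, hπxa] at h')
      have h2 : π m ≠ y := fun h => hmb (by
        have h' := congrArg π.symm h
        rwa [Equiv.symm_apply_apply, hπyb] at h')
      have h3 : π m ≠ z := fun h => hmc (by
        have h' := congrArg π.symm h
        rwa [Equiv.symm_apply_apply, hπzc] at h')
      refine hst m (π m) ⟨?_, ?_⟩
      · show Mp m (π m) (μ m)
        rw [hMf m hma hmb hmc]
        exact dOrd_top hcw (π m) (π m) (μ m) hne
      · show Wp (π m) m (μ.symm (π m))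
        rw [hWf (π m) h1 h2 h3, Equiv.symm_apply_apply]
        refine dOrd_top hcm m m (μ.symm (π m)) (fun h => hne ?_)
        have h' := congrArg μ h
        rw [Equiv.apply_symm_apply] at h'
        exact h'.symm
    have hrange : ∀ m, m = a ∨ m = b ∨ m = c → (μ m = x ∨ μ m = y ∨ μ m = z) := by
      intro m hm
      by_contra hno
      push_neg at hno
      obtain ⟨h1, h2, h3⟩ := hno
      have g1 : π.symm (μ m) ≠ a := fun h => h1 (by
        have h' := congrArg π h
        rwa [Equiv.apply_symm_apply, hπa] at h')
      have g2 : π.symm (μ m) ≠ b := fun h => h2 (by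
        have h' := congrArg π h
        rwa [Equiv.apply_symm_apply, hπb] at h')
      have g3 : π.symm (μ m) ≠ c := fun h => h3 (by
        have h' := congrArg π h
        rwa [Equiv.apply_symm_apply, hπc] at h')
      have h4 : μ (π.symm (μ m)) = π (π.symm (μ m)) := hfix _ g1 g2 g3
      rw [Equiv.apply_symm_apply] at h4
      have h5 := μ.injective h4
      rcases hm with rfl | rfl | rfl
      · exact g1 h5
      · exact g2 h5
      · exact g3 h5
    exact ⟨hrange a (Or.inl rfl), hrange b (Or.inr (Or.inl rfl)),
      hrange c (Or.inr (Or.inr rfl))⟩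
  -- analysis of the profile P
  have keyP : ∀ μ : Fin n ≃ Fin n, StableAt (M1, W1) μ →
      (μ b = x ∧ μ c = y) ∨ (μ b = y ∧ μ c = x) := by
    intro μ hst
    obtain ⟨hA, hB, hC⟩ := structKey M1 W1 hM1f hW1f μ hst
    rcases hA with ha | ha | ha <;> rcases hB with hb | hb | hb
    · exact absurd (ha.trans hb.symm) (inj2 μ a b hab)
    · refine absurd ?_ (hst b x)
      refine ⟨?_, ?_⟩
      · show M1 b x (μ b); rw [hM1b, hb]; exact cA_xy
      · show W1 x b (μ.symm x); rw [hW1x, symm_of μ a x ha]; exact cX_ba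
    · refine absurd ?_ (hst b x)
      refine ⟨?_, ?_⟩
      · show M1 b x (μ b); rw [hM1b, hb]; exact cA_xz
      · show W1 x b (μ.symm x); rw [hW1x, symm_of μ a x ha]; exact cX_ba
    · rcases hC with hc | hc | hc
      · exact absurd (hb.trans hc.symm) (inj2 μ b c hbc)
      · exact absurd (ha.trans hc.symm) (inj2 μ a c hac)
      · refine absurd ?_ (hst c x)
        refine ⟨?_, ?_⟩
        · show M1 c x (μ c); rw [hM1c, hc]; exact cC_xz
        · show W1 x c (μ.symm x); rw [hW1x, symm_of μ b x hb]; exact cX_cb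
    · exact absurd (ha.trans hb.symm) (inj2 μ a b hab)
    · refine absurd ?_ (hst b y)
      refine ⟨?_, ?_⟩
      · show M1 b y (μ b); rw [hM1b, hb]; exact cA_yz
      · show W1 y b (μ.symm y); rw [hW1y, symm_of μ a y ha]; exact cYZ_ba
    · rcases hC with hc | hc | hc
      · exact absurd (hb.trans hc.symm) (inj2 μ b c hbc)
      · exact Or.inl ⟨hb, hc⟩
      · exact absurd (ha.trans hc.symm) (inj2 μ a c hac)
    · rcases hC with hc | hc | hc
      · exact Or.inr ⟨hb, hc⟩
      · exact absurd (hb.trans hc.symm) (inj2 μ b c hbc)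
      · exact absurd (ha.trans hc.symm) (inj2 μ a c hac)
    · exact absurd (ha.trans hb.symm) (inj2 μ a b hab)
  -- analysis of the profile Q1 (man c deviates to dOrd Gw y z)
  have hQ1a : Function.update M1 c (dOrd Gw y z) a = dOrd Gw x x := by
    rw [Function.update_of_ne hac, hM1a]
  have hQ1b : Function.update M1 c (dOrd Gw y z) b = dOrd Gw x x := by
    rw [Function.update_of_ne hbc, hM1b]
  have hQ1c : Function.update M1 c (dOrd Gw y z) c = dOrd Gw y z := Function.update_self c _ M1
  have hQ1f : ∀ m, m ≠ a → m ≠ b → m ≠ c →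
      Function.update M1 c (dOrd Gw y z) m = dOrd Gw (π m) (π m) := by
    intro m hma hmb hmc
    rw [Function.update_of_ne hmc, hM1f m hma hmb hmc]
  have keyQ1 : ∀ μ : Fin n ≃ Fin n, StableAt (Function.update M1 c (dOrd Gw y z), W1) μ →
      μ c = y := by
    intro μ hst
    obtain ⟨hA, hB, hC⟩ := structKey _ W1 hQ1f hW1f μ hst
    rcases hA with ha | ha | ha <;> rcases hB with hb | hb | hb
    · exact absurd (ha.trans hb.symm) (inj2 μ a b hab)
    · refine absurd ?_ (hst b x)
      refine ⟨?_, ?_⟩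
      · show Function.update M1 c (dOrd Gw y z) b x (μ b); rw [hQ1b, hb]; exact cA_xy
      · show W1 x b (μ.symm x); rw [hW1x, symm_of μ a x ha]; exact cX_ba
    · refine absurd ?_ (hst b x)
      refine ⟨?_, ?_⟩
      · show Function.update M1 c (dOrd Gw y z) b x (μ b); rw [hQ1b, hb]; exact cA_xz
      · show W1 x b (μ.symm x); rw [hW1x, symm_of μ a x ha]; exact cX_ba
    · rcases hC with hc | hc | hc
      · exact absurd (hb.trans hc.symm) (inj2 μ b c hbc)
      · exact absurd (ha.trans hc.symm) (inj2 μ a c hac)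
      · refine absurd ?_ (hst c y)
        refine ⟨?_, ?_⟩
        · show Function.update M1 c (dOrd Gw y z) c y (μ c); rw [hQ1c, hc]; exact cC'_yz
        · show W1 y c (μ.symm y); rw [hW1y, symm_of μ a y ha]; exact cYZ_ca
    · exact absurd (ha.trans hb.symm) (inj2 μ a b hab)
    · refine absurd ?_ (hst b y)
      refine ⟨?_, ?_⟩
      · show Function.update M1 c (dOrd Gw y z) b y (μ b); rw [hQ1b, hb]; exact cA_yz
      · show W1 y b (μ.symm y); rw [hW1y, symm_of μ a y ha]; exact cYZ_ba
    · rcases hC with hc | hc | hc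
      · exact absurd (hb.trans hc.symm) (inj2 μ b c hbc)
      · exact hc
      · exact absurd (ha.trans hc.symm) (inj2 μ a c hac)
    · rcases hC with hc | hc | hc
      · refine absurd ?_ (hst c z)
        refine ⟨?_, ?_⟩
        · show Function.update M1 c (dOrd Gw y z) c z (μ c); rw [hQ1c, hc]; exact cC'_zx
        · show W1 z c (μ.symm z); rw [hW1z, symm_of μ a z ha]; exact cYZ_ca
      · exact absurd (hb.trans hc.symm) (inj2 μ b c hbc)
      · exact absurd (ha.trans hc.symm) (inj2 μ a c hac)
    · exact absurd (ha.trans hb.symm) (inj2 μ a b hab)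
  -- analysis of the profile Q2 (woman y deviates to dOrd Gm b a)
  have hQ2x : Function.update W1 y (dOrd Gm b a) x = dOrd Gm c c := by
    rw [Function.update_of_ne hxy, hW1x]
  have hQ2y : Function.update W1 y (dOrd Gm b a) y = dOrd Gm b a := Function.update_self y _ W1
  have hQ2z : Function.update W1 y (dOrd Gm b a) z = dOrd Gm b c := by
    rw [Function.update_of_ne (Ne.symm hyz), hW1z]
  have hQ2f : ∀ w, w ≠ x → w ≠ y → w ≠ z →
      Function.update W1 y (dOrd Gm b a) w = dOrd Gm (π.symm w) (π.symm w) := by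
    intro w hwx hwy hwz
    rw [Function.update_of_ne hwy, hW1f w hwx hwy hwz]
  have keyQ2 : ∀ μ : Fin n ≃ Fin n, StableAt (M1, Function.update W1 y (dOrd Gm b a)) μ →
      μ b = y := by
    intro μ hst
    obtain ⟨hA, hB, hC⟩ := structKey M1 _ hM1f hQ2f μ hst
    rcases hA with ha | ha | ha <;> rcases hB with hb | hb | hb
    · exact absurd (ha.trans hb.symm) (inj2 μ a b hab)
    · exact hb
    · refine absurd ?_ (hst b x)
      refine ⟨?_, ?_⟩
      · show M1 b x (μ b); rw [hM1b, hb]; exact cA_xz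
      · show Function.update W1 y (dOrd Gm b a) x b (μ.symm x)
        rw [hQ2x, symm_of μ a x ha]; exact cX_ba
    · rcases hC with hc | hc | hc
      · exact absurd (hb.trans hc.symm) (inj2 μ b c hbc)
      · exact absurd (ha.trans hc.symm) (inj2 μ a c hac)
      · refine absurd ?_ (hst c x)
        refine ⟨?_, ?_⟩
        · show M1 c x (μ c); rw [hM1c, hc]; exact cC_xz
        · show Function.update W1 y (dOrd Gm b a) x c (μ.symm x)
          rw [hQ2x, symm_of μ b x hb]; exact cX_cb
    · exact absurd (ha.trans hb.symm) (inj2 μ a b hab)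
    · refine absurd ?_ (hst b y)
      refine ⟨?_, ?_⟩
      · show M1 b y (μ b); rw [hM1b, hb]; exact cA_yz
      · show Function.update W1 y (dOrd Gm b a) y b (μ.symm y)
        rw [hQ2y, symm_of μ a y ha]; exact cY'_ba
    · rcases hC with hc | hc | hc
      · exact absurd (hb.trans hc.symm) (inj2 μ b c hbc)
      · refine absurd ?_ (hst a y)
        refine ⟨?_, ?_⟩
        · show M1 a y (μ a); rw [hM1a, ha]; exact cA_yz
        · show Function.update W1 y (dOrd Gm b a) y a (μ.symm y)
          rw [hQ2y, symm_of μ c y hc]; exact cY'_ac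
      · exact absurd (ha.trans hc.symm) (inj2 μ a c hac)
    · exact hb
    · exact absurd (ha.trans hb.symm) (inj2 μ a b hab)
  -- domain membership
  have hM1mem : ∀ m, M1 m ∈ {r : PrefRel n | IsPref r ∧ SPTree Gw r} := by
    intro m
    by_cases h1 : m = a
    · rw [h1, hM1a]; exact dOrd_mem hcw x x
    by_cases h2 : m = b
    · rw [h2, hM1b]; exact dOrd_mem hcw x x
    by_cases h3 : m = c
    · rw [h3, hM1c]; exact dOrd_mem hcw y x
    rw [hM1f m h1 h2 h3]; exact dOrd_mem hcw _ _
  have hW1mem : ∀ w, W1 w ∈ {r : PrefRel n | IsPref r ∧ SPTree Gm r} := by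
    intro w
    by_cases h1 : w = x
    · rw [h1, hW1x]; exact dOrd_mem hcm c c
    by_cases h2 : w = y
    · rw [h2, hW1y]; exact dOrd_mem hcm b c
    by_cases h3 : w = z
    · rw [h3, hW1z]; exact dOrd_mem hcm b c
    rw [hW1f w h1 h2 h3]; exact dOrd_mem hcm _ _
  have hdomP : InDomain {r : PrefRel n | IsPref r ∧ SPTree Gw r}
      {r : PrefRel n | IsPref r ∧ SPTree Gm r} (M1, W1) := ⟨hM1mem, hW1mem⟩
  have hdomQ1 : InDomain {r : PrefRel n | IsPref r ∧ SPTree Gw r}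
      {r : PrefRel n | IsPref r ∧ SPTree Gm r} (Function.update M1 c (dOrd Gw y z), W1) := by
    refine ⟨fun m => ?_, hW1mem⟩
    show Function.update M1 c (dOrd Gw y z) m ∈ {r : PrefRel n | IsPref r ∧ SPTree Gw r}
    by_cases h : m = c
    · rw [h, Function.update_self]; exact dOrd_mem hcw y z
    · rw [Function.update_of_ne h]; exact hM1mem m
  have hdomQ2 : InDomain {r : PrefRel n | IsPref r ∧ SPTree Gw r}
      {r : PrefRel n | IsPref r ∧ SPTree Gm r} (M1, Function.update W1 y (dOrd Gm b a)) := by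
    refine ⟨hM1mem, fun w => ?_⟩
    show Function.update W1 y (dOrd Gm b a) w ∈ {r : PrefRel n | IsPref r ∧ SPTree Gm r}
    by_cases h : w = y
    · rw [h, Function.update_self]; exact dOrd_mem hcm b a
    · rw [Function.update_of_ne h]; exact hW1mem w
  -- final contradiction
  rcases keyP (φ (M1, W1)) (hStable (M1, W1) hdomP) with ⟨hb1, hc1⟩ | ⟨hb1, hc1⟩
  · -- φ P matches b-x and c-y ; woman y profitably deviates to dOrd Gm b a
    have h2 := keyQ2 (φ (M1, Function.update W1 y (dOrd Gm b a))) (hStable _ hdomQ2)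
    refine (hSP (M1, W1) hdomP).2 y (dOrd Gm b a) (dOrd_mem hcm b a) ?_
    show W1 y ((φ (M1, Function.update W1 y (dOrd Gm b a))).symm y) ((φ (M1, W1)).symm y)
    rw [symm_of _ b y h2, symm_of _ c y hc1, hW1y]
    exact cYZ_bc
  · -- φ P matches b-y and c-x ; man c profitably deviates to dOrd Gw y z
    have h1 := keyQ1 (φ (Function.update M1 c (dOrd Gw y z), W1)) (hStable _ hdomQ1)
    refine (hSP (M1, W1) hdomP).1 c (dOrd Gw y z) (dOrd_mem hcw y z) ?_
    show M1 c (φ (Function.update M1 c (dOrd Gw y z), W1) c) (φ (M1, W1) c)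
    rw [h1, hc1, hM1c]
    exact cC_yx
end

section
/- Let D be a rich anonymous tree-single-peaked domain for a marriage market with n ≥ 3 men and n women on which some stable and strategy-proof matching rule exists. Then the men's or women's common admissible preference set contains exactly n preferences. -/
namespace Stmt18Aux


variable {n : ℕ}

theorem top_unique {X : Type*} {r : X → X → Prop} (hr : IsPref r) {t t' : X}
    (h : TopOf r t) (h' : TopOf r t') : t = t' := by
  haveI : IsStrictTotalOrder X r := hr
  by_contra hne
  exact asymm_of r (h t' (Ne.symm hne)) (h' t hne)

theorem list_top {X : Type*} {r : X → X → Prop} (hr : IsPref r) :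
    ∀ l : List X, l ≠ [] → ∃ t ∈ l, ∀ y ∈ l, y ≠ t → r t y := by
  haveI : IsStrictTotalOrder X r := hr
  intro l
  induction l with
  | nil => simp
  | cons a l ih =>
    intro _
    by_cases hl0 : l = []
    · subst hl0
      exact ⟨a, by simp, by intro y hy hne; simp at hy; exact absurd hy hne⟩
    · obtain ⟨t, htl, ht⟩ := ih hl0
      rcases trichotomous_of r a t with h | h | h
      · refine ⟨a, by simp, ?_⟩
        intro y hy hne
        rcases List.mem_cons.1 hy with rfl | hy
        · exact absurd rfl hne
        · by_cases hyt : y = t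
          · subst hyt; exact h
          · exact trans_of r h (ht y hy hyt)
      · subst h
        refine ⟨a, by simp, ?_⟩
        intro y hy hne
        rcases List.mem_cons.1 hy with rfl | hy
        · exact absurd rfl hne
        · exact ht y hy hne
      · refine ⟨t, by simp [htl], ?_⟩
        intro y hy hne
        rcases List.mem_cons.1 hy with rfl | hy
        · exact h
        · exact ht y hy hne

theorem exists_top (hn : 0 < n) (P : PrefRel n) (hP : IsPref P) : ∃ t, TopOf P t := by
  obtain ⟨t, _, ht⟩ := list_top hP (List.finRange n)
    (by simp [List.finRange_eq_nil_iff]; omega)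
  exact ⟨t, fun y hy => ht y (List.mem_finRange y) hy⟩

theorem td_ncard (hn : 0 < n) (D : Set (PrefRel n)) (hD : ∀ P ∈ D, IsPref P)
    (hr : Rich D) (htd : TD D) : D.ncard = n := by
  have htop : ∀ P : D, ∃ t, TopOf (P : PrefRel n) t := fun P => exists_top hn _ (hD P P.2)
  choose f hf using htop
  have hinj : Function.Injective f := by
    intro P Q hPQ
    by_contra hne
    haveI : IsStrictTotalOrder (Fin n) (P : PrefRel n) := hD P P.2
    haveI : IsStrictTotalOrder (Fin n) (Q : PrefRel n) := hD Q Q.2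
    have hPQ' : (P : PrefRel n) ≠ (Q : PrefRel n) := fun h => hne (Subtype.ext h)
    have hex : ∃ y z, (P : PrefRel n) y z ∧ (Q : PrefRel n) z y := by
      by_contra hcon
      push_neg at hcon
      apply hPQ'
      funext y z
      apply propext
      constructor
      · intro hyz
        rcases trichotomous_of (Q : PrefRel n) y z with h | rfl | h
        · exact h
        · exact absurd hyz (irrefl_of (P : PrefRel n) y)
        · exact absurd h (hcon y z hyz)
      · intro hyz
        rcases trichotomous_of (P : PrefRel n) y z with h | rfl | h
        · exact h
        · exact absurd hyz (irrefl_of (Q : PrefRel n) y)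
        · exact absurd hyz (hcon z y h)
    obtain ⟨y, z, hPyz, hQzy⟩ := hex
    have htP : TopOf (P : PrefRel n) (f Q) := hPQ ▸ hf P
    have htQ : TopOf (Q : PrefRel n) (f Q) := hf Q
    have hyne : y ≠ z := fun h => irrefl_of (P : PrefRel n) y (h ▸ hPyz)
    have hzt : z ≠ f Q := by
      intro h
      rcases eq_or_ne y (f Q) with h2 | h2
      · exact hyne (h2.trans h.symm)
      · exact asymm_of (P : PrefRel n) (htP y h2) (h ▸ hPyz)
    have hyt : y ≠ f Q := by
      intro h
      exact asymm_of (Q : PrefRel n) (htQ z hzt) (h ▸ hQzy)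
    exact htd (f Q) y z ⟨P, P.2, htP y hyt, hPyz⟩ ⟨Q, Q.2, htQ z hzt, hQzy⟩
  have hsurj : Function.Surjective f := by
    intro x
    obtain ⟨P, hPD, hPx⟩ := hr x
    exact ⟨⟨P, hPD⟩, top_unique (hD P hPD) (hf ⟨P, hPD⟩) hPx⟩
  have h1 : Nat.card D = Nat.card (Fin n) := Nat.card_eq_of_bijective f ⟨hinj, hsurj⟩
  rw [← Nat.card_coe_set_eq, h1, Nat.card_eq_fintype_card, Fintype.card_fin]

section Tree

variable {X : Type*} {G : SimpleGraph X}

theorem onPath_iff (hG : G.IsTree) {a x y : X} (p : G.Walk x y) (hp : p.IsPath) :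
    OnPath G a x y ↔ a ∈ p.support := by
  constructor
  · exact fun h => h p hp
  · intro ha q hq
    obtain ⟨r, _, hu⟩ := hG.existsUnique_path x y
    rw [hu q hq, ← hu p hp]
    exact ha

theorem onPath_start (a y : X) : OnPath G a a y :=
  fun p _ => p.start_mem_support

theorem cut [DecidableEq X] (hG : G.IsTree) {x y z : X} (hz : OnPath G z x y) :
    ∀ t, OnPath G z t x ∨ OnPath G z t y := by
  intro t
  by_contra h
  push_neg at h
  obtain ⟨h1, h2⟩ := h
  simp only [OnPath, not_forall] at h1 h2
  obtain ⟨p, hp, hzp⟩ := h1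
  obtain ⟨q, hq, hzq⟩ := h2
  have hw : z ∉ (p.reverse.append q).support := by
    intro hmem
    rw [SimpleGraph.Walk.mem_support_append_iff] at hmem
    rcases hmem with hmem | hmem
    · rw [SimpleGraph.Walk.support_reverse, List.mem_reverse] at hmem
      exact hzp hmem
    · exact hzq hmem
  have hbp := (p.reverse.append q).bypass_isPath
  have := (onPath_iff hG _ hbp).1 hz
  exact hw (SimpleGraph.Walk.support_bypass_subset _ this)

theorem median [DecidableEq X] (hG : G.IsTree) (x y z : X) :
    ∃ m, OnPath G m x y ∧ OnPath G m y z ∧ OnPath G m x z := by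
  obtain ⟨q, hq⟩ := (hG.existsUnique_path x y).exists
  induction q with
  | nil => exact ⟨_, onPath_start _ _, onPath_start _ _, onPath_start _ _⟩
  | @cons a b c h p ih =>
    rw [SimpleGraph.Walk.cons_isPath_iff] at hq
    obtain ⟨hp, hap⟩ := hq
    by_cases hx : OnPath G a c z
    · exact ⟨a, onPath_start _ _, hx, onPath_start _ _⟩
    · obtain ⟨m, h1, h2, h3⟩ := ih hp
      refine ⟨m, ?_, h2, ?_⟩
      · -- m on path a..y via cons h p
        have : m ∈ (SimpleGraph.Walk.cons h p).support := by
          rw [SimpleGraph.Walk.support_cons]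
          exact List.mem_cons_of_mem _ (h1 p hp)
        exact (onPath_iff hG _ (SimpleGraph.Walk.cons_isPath_iff h p |>.2 ⟨hp, hap⟩)).2 this
      · -- m on path a..z
        obtain ⟨r, hr⟩ := (hG.existsUnique_path b z).exists
        have haz : a ∉ r.support := by
          intro hmem
          have honr : OnPath G a b z := (onPath_iff hG r hr).2 hmem
          rcases cut hG honr c with hc | hc
          · have := hc p.reverse hp.reverse
            rw [SimpleGraph.Walk.support_reverse, List.mem_reverse] at this
            exact hap this
          · exact hx hc
        have hcons : (SimpleGraph.Walk.cons h r).IsPath :=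
          (SimpleGraph.Walk.cons_isPath_iff h r).2 ⟨hr, haz⟩
        refine (onPath_iff hG _ hcons).2 ?_
        rw [SimpleGraph.Walk.support_cons]
        exact List.mem_cons_of_mem _ (h3 r hr)

end Tree

theorem normalize (hn : 0 < n) (D : Set (PrefRel n)) (hD : ∀ P ∈ D, IsPref P)
    (hr : Rich D) (G : SimpleGraph (Fin n)) (hG : G.IsTree)
    (hsp : ∀ P ∈ D, SPTree G P) (hntd : ¬ TD D) :
    ∃ (x y z : Fin n) (P P' R : PrefRel n), P ∈ D ∧ P' ∈ D ∧ R ∈ D ∧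
      P x y ∧ P y z ∧ P' x z ∧ P' z y ∧ TopOf R y ∧ R x z := by
  simp only [TD, not_forall, not_not] at hntd
  obtain ⟨x, y, z, ⟨P, hP, hPxy, hPyz⟩, P', hP', hP'xz, hP'zy⟩ := hntd
  haveI hPi : IsStrictTotalOrder (Fin n) P := hD P hP
  haveI hP'i : IsStrictTotalOrder (Fin n) P' := hD P' hP'
  have hPxz : P x z := trans_of P hPxy hPyz
  have hP'xy : P' x y := trans_of P' hP'xz hP'zy
  have hxy : x ≠ y := fun h => irrefl_of P x (h ▸ hPxy)
  have hyz : y ≠ z := fun h => irrefl_of P y (h ▸ hPyz)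
  have hxz : x ≠ z := fun h => irrefl_of P x (h ▸ hPxz)
  obtain ⟨R, hR, hRy⟩ := hr y
  haveI hRi : IsStrictTotalOrder (Fin n) R := hD R hR
  have spP := hsp P hP
  have spP' := hsp P' hP'
  have spR := hsp R hR
  rcases trichotomous_of R x z with hRxz | h | hRzx
  · exact ⟨x, y, z, P, P', R, hP, hP', hR, hPxy, hPyz, hP'xz, hP'zy, hRy, hRxz⟩
  · exact absurd h hxz
  · obtain ⟨t, ht⟩ := exists_top hn P hPi
    obtain ⟨t', ht'⟩ := exists_top hn P' hP'i
    obtain ⟨m, hmxy, hmyz, hmxz⟩ := median hG x y z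
    have hmz : m ≠ z := by
      intro he
      rcases cut hG hmxy t with hc | hc
      · rcases spP t m x ht hc with he2 | h2
        · exact hxz (he2.symm.trans he)
        · exact asymm_of P hPxz (he ▸ h2)
      · rcases spP t m y ht hc with he2 | h2
        · exact hyz (he2.symm.trans he)
        · exact asymm_of P hPyz (he ▸ h2)
    have hmy : m ≠ y := by
      intro he
      rcases cut hG hmxz t' with hc | hc
      · rcases spP' t' m x ht' hc with he2 | h2
        · exact hxy (he2.symm.trans he)
        · exact asymm_of P' hP'xy (he ▸ h2)
      · rcases spP' t' m z ht' hc with he2 | h2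
        · exact hyz (he.symm.trans he2)
        · exact asymm_of P' hP'zy (he ▸ h2)
    have hmx : m ≠ x := by
      intro he
      rcases spR y m z hRy hmyz with he2 | h2
      · exact hxz (he.symm.trans he2)
      · exact asymm_of R (he ▸ h2) hRzx
    have hRmz : R m z := by
      rcases spR y m z hRy hmyz with he2 | h2
      · exact absurd he2 hmz
      · exact h2
    have hPmy : P m y := by
      rcases cut hG hmxy t with hc | hc
      · rcases spP t m x ht hc with he2 | h2
        · exact absurd he2 hmx
        · exact trans_of P h2 hPxy
      · rcases spP t m y ht hc with he2 | h2
        · exact absurd he2 hmy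
        · exact h2
    have hP'mz : P' m z := by
      rcases cut hG hmxz t' with hc | hc
      · rcases spP' t' m x ht' hc with he2 | h2
        · exact absurd he2 hmx
        · exact trans_of P' h2 hP'xz
      · rcases spP' t' m z ht' hc with he2 | h2
        · exact absurd he2 hmz
        · exact h2
    exact ⟨m, y, z, P, P', R, hP, hP', hR, hPmy, hPyz, hP'mz, hP'zy, hRy, hRmz⟩




def rk3 (a b c : Fin 3) (i : Fin 3) : ℕ := if i = a then 0 else if i = b then 1 else 2

def mkP (a b c : Fin 3) : Fin 3 → Fin 3 → Bool := fun i j => decide (rk3 a b c i < rk3 a b c j)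

def Stab3 (M W : Fin 3 → (Fin 3 → Fin 3 → Bool)) (μ ι : Fin 3 → Fin 3) : Prop :=
  ∀ i j, ¬(M i j (μ i) = true ∧ W j i (ι j) = true)

instance (M W : Fin 3 → (Fin 3 → Fin 3 → Bool)) (μ ι : Fin 3 → Fin 3) :
    Decidable (Stab3 M W μ ι) := by unfold Stab3; infer_instance

theorem core0 : ∀ μ ι : Fin 3 → Fin 3, (∀ i, ι (μ i) = i) →
    Stab3 ![mkP 0 1 2, mkP 0 1 2, mkP 1 0 2] ![mkP 2 0 1, mkP 0 2 1, mkP 0 1 2] μ ι →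
    ((∀ μ' ι' : Fin 3 → Fin 3, (∀ i, ι' (μ' i) = i) →
        Stab3 ![mkP 0 1 2, mkP 0 1 2, mkP 1 0 2]
          (Function.update ![mkP 2 0 1, mkP 0 2 1, mkP 0 1 2] 1 (mkP 0 1 2)) μ' ι' →
        mkP 0 2 1 (ι' 1) (ι 1) = true) ∨
     (∀ μ' ι' : Fin 3 → Fin 3, (∀ i, ι' (μ' i) = i) →
        Stab3 (Function.update ![mkP 0 1 2, mkP 0 1 2, mkP 1 0 2] 0 (mkP 0 2 1))
          ![mkP 2 0 1, mkP 0 2 1, mkP 0 1 2] μ' ι' →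
        mkP 0 1 2 (μ' 0) (μ 0) = true)) := by decide

theorem core1 : ∀ μ ι : Fin 3 → Fin 3, (∀ i, ι (μ i) = i) →
    Stab3 ![mkP 0 1 2, mkP 1 0 2, mkP 0 1 2] ![mkP 1 0 2, mkP 0 1 2, mkP 0 1 2] μ ι →
    ((∀ μ' ι' : Fin 3 → Fin 3, (∀ i, ι' (μ' i) = i) →
        Stab3 ![mkP 0 1 2, mkP 1 0 2, mkP 0 1 2]
          (Function.update ![mkP 1 0 2, mkP 0 1 2, mkP 0 1 2] 1 (mkP 0 2 1)) μ' ι' →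
        mkP 0 1 2 (ι' 1) (ι 1) = true) ∨
     (∀ μ' ι' : Fin 3 → Fin 3, (∀ i, ι' (μ' i) = i) →
        Stab3 (Function.update ![mkP 0 1 2, mkP 1 0 2, mkP 0 1 2] 0 (mkP 0 2 1))
          ![mkP 1 0 2, mkP 0 1 2, mkP 0 1 2] μ' ι' →
        mkP 0 1 2 (μ' 0) (μ 0) = true)) := by decide




theorem tblEquiv {n : ℕ} {r : PrefRel n} (hr : IsPref r) (w : Fin 3 → Fin n)
    (a b c : Fin 3) (hab : a ≠ b) (hac : a ≠ c) (hbc : b ≠ c)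
    (h1 : r (w a) (w b)) (h2 : r (w b) (w c)) :
    ∀ i j, mkP a b c i j = true ↔ r (w i) (w j) := by
  haveI : IsStrictTotalOrder (Fin n) r := hr
  have h3 : r (w a) (w c) := trans_of r h1 h2
  have hba : ¬ r (w b) (w a) := asymm_of r h1
  have hcb : ¬ r (w c) (w b) := asymm_of r h2
  have hca : ¬ r (w c) (w a) := asymm_of r h3
  have haa : ¬ r (w a) (w a) := irrefl_of r (w a)
  have hbb : ¬ r (w b) (w b) := irrefl_of r (w b)
  have hcc : ¬ r (w c) (w c) := irrefl_of r (w c)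
  have cover : ∀ x : Fin 3, x = a ∨ x = b ∨ x = c := by
    have h : ∀ a b c x : Fin 3, a ≠ b → a ≠ c → b ≠ c → (x = a ∨ x = b ∨ x = c) := by decide
    exact fun x => h a b c x hab hac hbc
  intro i j
  rcases cover i with rfl | rfl | rfl <;> rcases cover j with rfl | rfl | rfl <;>
    simp [mkP, rk3, hab, hac, hbc, Ne.symm hab, Ne.symm hac, Ne.symm hbc,
      h1, h2, h3, hba, hcb, hca, haa, hbb, hcc]

theorem vec3_inj {α : Type*} {a b c : α} (hab : a ≠ b) (hac : a ≠ c) (hbc : b ≠ c) :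
    Function.Injective ![a, b, c] := by
  intro i j hij
  fin_cases i <;> fin_cases j <;> simp_all

theorem exists_perm_extend {n : ℕ} (u v : Fin 3 → Fin n)
    (hu : Function.Injective u) (hv : Function.Injective v) :
    ∃ π : Equiv.Perm (Fin n), ∀ i, π (u i) = v i := by
  classical
  have hc : Fintype.card (↥(Set.range u)ᶜ) = Fintype.card (↥(Set.range v)ᶜ) := by
    rw [Fintype.card_compl_set, Fintype.card_compl_set]
    congr 1
    rw [← Fintype.card_congr (Equiv.ofInjective u hu),
      Fintype.card_congr (Equiv.ofInjective v hv)]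
  refine ⟨((Equiv.Set.sumCompl (Set.range u)).symm.trans
    (((Equiv.ofInjective u hu).symm.trans (Equiv.ofInjective v hv)).sumCongr
      (Fintype.equivOfCardEq hc))).trans (Equiv.Set.sumCompl (Set.range v)), fun i => ?_⟩
  simp only [Equiv.trans_apply]
  rw [Equiv.Set.sumCompl_symm_apply_of_mem (Set.mem_range_self i)]
  simp only [Equiv.sumCongr_apply, Sum.map_inl, Equiv.trans_apply,
    Equiv.ofInjective_symm_apply, Equiv.Set.sumCompl_apply_inl, Equiv.ofInjective_apply]

theorem restrict {n : ℕ} (u v : Fin 3 → Fin n) (hu : Function.Injective u)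
    (π : Equiv.Perm (Fin n)) (hπ : ∀ i, π (u i) = v i)
    (p : Profile n)
    (hm : ∀ m, (∀ i, m ≠ u i) → TopOf (p.1 m) (π m))
    (hw : ∀ w, (∀ j, w ≠ v j) → TopOf (p.2 w) (π.symm w))
    (μ : Fin n ≃ Fin n) (hst : StableAt p μ) :
    ∃ ρ ι : Fin 3 → Fin 3, (∀ i, ι (ρ i) = i) ∧ (∀ i, μ (u i) = v (ρ i)) ∧
      (∀ j, μ.symm (v j) = u (ι j)) := by
  have hout : ∀ m, (∀ i, m ≠ u i) → μ m = π m := by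
    intro m hm0
    by_contra hne
    apply hst m (π m)
    constructor
    · exact hm m hm0 (μ m) hne
    · have how : ∀ j, π m ≠ v j := by
        intro j hj
        exact hm0 j (π.injective (by rw [hπ j]; exact hj))
      have htop := hw (π m) how
      rw [Equiv.symm_apply_apply] at htop
      apply htop
      intro hh
      exact hne ((Equiv.symm_apply_eq μ).1 hh).symm
  have hro : ∀ i, ∃ j, μ (u i) = v j := by
    intro i
    by_contra hno
    push_neg at hno
    have h2 : ∀ k, π.symm (μ (u i)) ≠ u k := by
      intro k hk
      apply hno k
      rw [← hπ k, ← hk, Equiv.apply_symm_apply]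
    have h3 := hout _ h2
    rw [Equiv.apply_symm_apply] at h3
    exact h2 i (μ.injective h3)
  choose ρ hρ using hro
  have hρinj : Function.Injective ρ := by
    intro i i' h
    apply hu
    apply μ.injective
    rw [hρ, hρ, h]
  have hbij := Finite.injective_iff_bijective.1 hρinj
  let e := Equiv.ofBijective ρ hbij
  refine ⟨ρ, e.symm, fun i => e.symm_apply_apply i, hρ, fun j => ?_⟩
  apply μ.injective
  rw [Equiv.apply_symm_apply, hρ]
  exact congrArg v (e.apply_symm_apply j).symm

theorem main_bridge {n : ℕ}
    (Dm Dw : Set (PrefRel n)) (φ : Profile n → (Fin n ≃ Fin n))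
    (hφs : StableRule Dm Dw φ) (hφsp : SP Dm Dw φ)
    (u v : Fin 3 → Fin n) (hu : Function.Injective u) (hv : Function.Injective v)
    (π : Equiv.Perm (Fin n)) (hπ : ∀ i, π (u i) = v i)
    (Fm : Fin n → PrefRel n) (hFmD : ∀ w, Fm w ∈ Dm) (hFmT : ∀ w, TopOf (Fm w) w)
    (Fw : Fin n → PrefRel n) (hFwD : ∀ m, Fw m ∈ Dw) (hFwT : ∀ m, TopOf (Fw m) m)
    (TM TW : Fin 3 → (Fin 3 → Fin 3 → Bool)) (TMdev TWdev : Fin 3 → Fin 3 → Bool)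
    (PM PW : Fin 3 → PrefRel n) (hPMD : ∀ i, PM i ∈ Dm) (hPWD : ∀ j, PW j ∈ Dw)
    (PMdev : PrefRel n) (hPMdevD : PMdev ∈ Dm)
    (PWdev : PrefRel n) (hPWdevD : PWdev ∈ Dw)
    (hTM : ∀ i j k, TM i j k = true ↔ PM i (v j) (v k))
    (hTW : ∀ j i k, TW j i k = true ↔ PW j (u i) (u k))
    (hTMdev : ∀ j k, TMdev j k = true ↔ PMdev (v j) (v k))
    (hTWdev : ∀ i k, TWdev i k = true ↔ PWdev (u i) (u k))
    (hcore : ∀ μ ι : Fin 3 → Fin 3, (∀ i, ι (μ i) = i) → Stab3 TM TW μ ι →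
      ((∀ μ' ι' : Fin 3 → Fin 3, (∀ i, ι' (μ' i) = i) →
          Stab3 TM (Function.update TW 1 TWdev) μ' ι' → TW 1 (ι' 1) (ι 1) = true) ∨
       (∀ μ' ι' : Fin 3 → Fin 3, (∀ i, ι' (μ' i) = i) →
          Stab3 (Function.update TM 0 TMdev) TW μ' ι' → TM 0 (μ' 0) (μ 0) = true))) :
    False := by
  classical
  set pm : Fin n → PrefRel n := fun m =>
    if m = u 0 then PM 0 else if m = u 1 then PM 1 else if m = u 2 then PM 2 else Fm (π m)
    with hpm
  set pw : Fin n → PrefRel n := fun w =>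
    if w = v 0 then PW 0 else if w = v 1 then PW 1 else if w = v 2 then PW 2
    else Fw (π.symm w) with hpw
  have h10 : u 1 ≠ u 0 := fun h => absurd (hu h) (by decide)
  have h20 : u 2 ≠ u 0 := fun h => absurd (hu h) (by decide)
  have h21 : u 2 ≠ u 1 := fun h => absurd (hu h) (by decide)
  have k10 : v 1 ≠ v 0 := fun h => absurd (hv h) (by decide)
  have k20 : v 2 ≠ v 0 := fun h => absurd (hv h) (by decide)
  have k21 : v 2 ≠ v 1 := fun h => absurd (hv h) (by decide)
  have hp1u : ∀ i, pm (u i) = PM i := by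
    intro i
    fin_cases i
    · simp [hpm]
    · simp [hpm, h10]
    · simp [hpm, h20, h21]
  have hp2v : ∀ j, pw (v j) = PW j := by
    intro j
    fin_cases j
    · simp [hpw]
    · simp [hpw, k10]
    · simp [hpw, k20, k21]
  have hpmout : ∀ m, (∀ i, m ≠ u i) → pm m = Fm (π m) := by
    intro m h
    simp only [hpm, if_neg (h 0), if_neg (h 1), if_neg (h 2)]
  have hpwout : ∀ w, (∀ j, w ≠ v j) → pw w = Fw (π.symm w) := by
    intro w h
    simp only [hpw, if_neg (h 0), if_neg (h 1), if_neg (h 2)]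
  have hdom : InDomain Dm Dw (pm, pw) := by
    constructor
    · intro m
      show pm m ∈ Dm
      rw [hpm]
      dsimp only
      split_ifs <;> first | apply hPMD | apply hFmD
    · intro w
      show pw w ∈ Dw
      rw [hpw]
      dsimp only
      split_ifs <;> first | apply hPWD | apply hFwD
  have hmtop : ∀ m, (∀ i, m ≠ u i) → TopOf ((pm, pw).1 m) (π m) := by
    intro m h
    show TopOf (pm m) (π m)
    rw [hpmout m h]
    exact hFmT (π m)
  have hwtop : ∀ w, (∀ j, w ≠ v j) → TopOf ((pm, pw).2 w) (π.symm w) := by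
    intro w h
    show TopOf (pw w) (π.symm w)
    rw [hpwout w h]
    exact hFwT (π.symm w)
  have hst := hφs (pm, pw) hdom
  obtain ⟨ρ, ι, hι, hρ, hισ⟩ := restrict u v hu π hπ (pm, pw) hmtop hwtop (φ (pm, pw)) hst
  have hS3 : Stab3 TM TW ρ ι := by
    rintro i j ⟨hb1, hb2⟩
    apply hst (u i) (v j)
    constructor
    · show pm (u i) (v j) (φ (pm, pw) (u i))
      rw [hp1u i, hρ i]
      exact (hTM i j (ρ i)).1 hb1
    · show pw (v j) (u i) ((φ (pm, pw)).symm (v j))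
      rw [hp2v j, hισ j]
      exact (hTW j i (ι j)).1 hb2
  rcases hcore ρ ι hι hS3 with hc | hc
  · -- woman (v 1) deviates to PWdev
    have hdom' : InDomain Dm Dw (pm, Function.update pw (v 1) PWdev) := by
      constructor
      · exact hdom.1
      · intro w
        show Function.update pw (v 1) PWdev w ∈ Dw
        rcases eq_or_ne w (v 1) with rfl | hw
        · rw [Function.update_self]; exact hPWdevD
        · rw [Function.update_of_ne hw]; exact hdom.2 w
    have hwtop' : ∀ w, (∀ j, w ≠ v j) →
        TopOf ((pm, Function.update pw (v 1) PWdev).2 w) (π.symm w) := by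
      intro w h
      show TopOf (Function.update pw (v 1) PWdev w) (π.symm w)
      rw [Function.update_of_ne (h 1), hpwout w h]
      exact hFwT (π.symm w)
    have hst' := hφs _ hdom'
    obtain ⟨ρ', ι', hι', hρ', hισ'⟩ := restrict u v hu π hπ (pm, Function.update pw (v 1) PWdev) hmtop hwtop' _ hst'
    have hS3' : Stab3 TM (Function.update TW 1 TWdev) ρ' ι' := by
      rintro i j ⟨hb1, hb2⟩
      apply hst' (u i) (v j)
      constructor
      · show pm (u i) (v j) (φ _ (u i))
        rw [hp1u i, hρ' i]
        exact (hTM i j (ρ' i)).1 hb1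
      · show Function.update pw (v 1) PWdev (v j) (u i) ((φ _).symm (v j))
        rw [hισ' j]
        rcases eq_or_ne j 1 with rfl | hj
        · rw [Function.update_self]
          rw [Function.update_self] at hb2
          exact (hTWdev i (ι' 1)).1 hb2
        · rw [Function.update_of_ne (fun h => hj (hv h)), hp2v j]
          rw [Function.update_of_ne hj] at hb2
          exact (hTW j i (ι' j)).1 hb2
    have hbet := hc ρ' ι' hι' hS3'
    have habs : PW 1 (u (ι' 1)) (u (ι 1)) := (hTW 1 (ι' 1) (ι 1)).1 hbet
    have hsp2 := (hφsp (pm, pw) hdom).2 (v 1) PWdev hPWdevD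
    apply hsp2
    show pw (v 1) ((φ (pm, Function.update pw (v 1) PWdev)).symm (v 1))
      ((φ (pm, pw)).symm (v 1))
    rw [hp2v 1, hισ' 1, hισ 1]
    exact habs
  · -- man (u 0) deviates to PMdev
    have hdom' : InDomain Dm Dw (Function.update pm (u 0) PMdev, pw) := by
      constructor
      · intro m
        show Function.update pm (u 0) PMdev m ∈ Dm
        rcases eq_or_ne m (u 0) with rfl | hm
        · rw [Function.update_self]; exact hPMdevD
        · rw [Function.update_of_ne hm]; exact hdom.1 m
      · exact hdom.2
    have hmtop' : ∀ m, (∀ i, m ≠ u i) →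
        TopOf ((Function.update pm (u 0) PMdev, pw).1 m) (π m) := by
      intro m h
      show TopOf (Function.update pm (u 0) PMdev m) (π m)
      rw [Function.update_of_ne (h 0), hpmout m h]
      exact hFmT (π m)
    have hst' := hφs _ hdom'
    obtain ⟨ρ', ι', hι', hρ', hισ'⟩ := restrict u v hu π hπ (Function.update pm (u 0) PMdev, pw) hmtop' hwtop _ hst'
    have hS3' : Stab3 (Function.update TM 0 TMdev) TW ρ' ι' := by
      rintro i j ⟨hb1, hb2⟩
      apply hst' (u i) (v j)
      constructor
      · show Function.update pm (u 0) PMdev (u i) (v j) (φ _ (u i))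
        rw [hρ' i]
        rcases eq_or_ne i 0 with rfl | hi
        · rw [Function.update_self]
          rw [Function.update_self] at hb1
          exact (hTMdev j (ρ' 0)).1 hb1
        · rw [Function.update_of_ne (fun h => hi (hu h)), hp1u i]
          rw [Function.update_of_ne hi] at hb1
          exact (hTM i j (ρ' i)).1 hb1
      · show pw (v j) (u i) ((φ _).symm (v j))
        rw [hp2v j, hισ' j]
        exact (hTW j i (ι' j)).1 hb2
    have hbet := hc ρ' ι' hι' hS3'
    have habs : PM 0 (v (ρ' 0)) (v (ρ 0)) := (hTM 0 (ρ' 0) (ρ 0)).1 hbet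
    have hsp1 := (hφsp (pm, pw) hdom).1 (u 0) PMdev hPMdevD
    apply hsp1
    show pm (u 0) (φ (Function.update pm (u 0) PMdev, pw) (u 0)) (φ (pm, pw) (u 0))
    rw [hp1u 0, hρ' 0, hρ 0]
    exact habs


end Stmt18Aux

/-- if a stable and strategy-proof rule exists on a rich anonymous
tree-single-peaked domain, one of the common preference sets has exactly `n` elements. -/
theorem stmt18 {n : ℕ} (hn : 3 ≤ n) (Dm Dw : Set (PrefRel n))
    (hDm : ∀ P ∈ Dm, IsPref P) (hDw : ∀ P ∈ Dw, IsPref P)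
    (hrm : Rich Dm) (hrw : Rich Dw)
    (Gw : SimpleGraph (Fin n)) (hGw : Gw.IsTree) (hspm : ∀ P ∈ Dm, SPTree Gw P)
    (Gm : SimpleGraph (Fin n)) (hGm : Gm.IsTree) (hspw : ∀ P ∈ Dw, SPTree Gm P)
    (hex : ∃ φ : Profile n → (Fin n ≃ Fin n), StableRule Dm Dw φ ∧ SP Dm Dw φ) :
    Dm.ncard = n ∨ Dw.ncard = n := by
  classical
  by_contra hcon
  push_neg at hcon
  obtain ⟨hm, hw⟩ := hcon
  have hpos : 0 < n := by omega
  have hntdm : ¬ TD Dm := fun h => hm (Stmt18Aux.td_ncard hpos Dm hDm hrm h)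
  have hntdw : ¬ TD Dw := fun h => hw (Stmt18Aux.td_ncard hpos Dw hDw hrw h)
  obtain ⟨x, y, z, Pm, Pm', Ry, hPmD, hPm'D, hRyD, hPm1, hPm2, hPm'1, hPm'2, hRyT, hRyxz⟩ :=
    Stmt18Aux.normalize hpos Dm hDm hrm Gw hGw hspm hntdm
  obtain ⟨a, b, c, Pw, Pw', Sb, hPwD, hPw'D, hSbD, hPw1, hPw2, hPw'1, hPw'2, hSbT, hSbac⟩ :=
    Stmt18Aux.normalize hpos Dw hDw hrw Gm hGm hspw hntdw
  obtain ⟨Sc, hScD, hScT⟩ := hrw c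
  obtain ⟨φ, hφs, hφsp⟩ := hex
  choose Fm hFmD hFmT using hrm
  choose Fw hFwD hFwT using hrw
  haveI iPm : IsStrictTotalOrder (Fin n) Pm := hDm Pm hPmD
  haveI iPm' : IsStrictTotalOrder (Fin n) Pm' := hDm Pm' hPm'D
  haveI iRy : IsStrictTotalOrder (Fin n) Ry := hDm Ry hRyD
  haveI iPw : IsStrictTotalOrder (Fin n) Pw := hDw Pw hPwD
  haveI iPw' : IsStrictTotalOrder (Fin n) Pw' := hDw Pw' hPw'D
  haveI iSb : IsStrictTotalOrder (Fin n) Sb := hDw Sb hSbD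
  haveI iSc : IsStrictTotalOrder (Fin n) Sc := hDw Sc hScD
  have hxy : x ≠ y := fun h => irrefl_of Pm x (h ▸ hPm1)
  have hyz : y ≠ z := fun h => irrefl_of Pm y (h ▸ hPm2)
  have hxz : x ≠ z := fun h => irrefl_of Pm x (h ▸ trans_of Pm hPm1 hPm2)
  have hab : a ≠ b := fun h => irrefl_of Pw a (h ▸ hPw1)
  have hbc : b ≠ c := fun h => irrefl_of Pw b (h ▸ hPw2)
  have hac : a ≠ c := fun h => irrefl_of Pw a (h ▸ trans_of Pw hPw1 hPw2)
  have hu : Function.Injective (![a, b, c] : Fin 3 → Fin n) :=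
    Stmt18Aux.vec3_inj hab hac hbc
  have hv : Function.Injective (![x, y, z] : Fin 3 → Fin n) :=
    Stmt18Aux.vec3_inj hxy hxz hyz
  obtain ⟨π, hπ⟩ := Stmt18Aux.exists_perm_extend ![a, b, c] ![x, y, z] hu hv
  have hRyyx : Ry y x := hRyT x hxy
  have hSbba : Sb b a := hSbT a hab
  have hScca : Sc c a := hScT a hac
  have hSccb : Sc c b := hScT b hbc
  have hTMdev : ∀ j k, Stmt18Aux.mkP 0 2 1 j k = true ↔ Pm' (![x, y, z] j) (![x, y, z] k) :=
    Stmt18Aux.tblEquiv (hDm Pm' hPm'D) ![x, y, z] 0 2 1 (by decide) (by decide) (by decide)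
      hPm'1 hPm'2
  have hTWPw : ∀ j k, Stmt18Aux.mkP 0 1 2 j k = true ↔ Pw (![a, b, c] j) (![a, b, c] k) :=
    Stmt18Aux.tblEquiv (hDw Pw hPwD) ![a, b, c] 0 1 2 (by decide) (by decide) (by decide)
      hPw1 hPw2
  have hTWPw' : ∀ j k, Stmt18Aux.mkP 0 2 1 j k = true ↔ Pw' (![a, b, c] j) (![a, b, c] k) :=
    Stmt18Aux.tblEquiv (hDw Pw' hPw'D) ![a, b, c] 0 2 1 (by decide) (by decide) (by decide)
      hPw'1 hPw'2
  have hTMPm : ∀ j k, Stmt18Aux.mkP 0 1 2 j k = true ↔ Pm (![x, y, z] j) (![x, y, z] k) :=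
    Stmt18Aux.tblEquiv (hDm Pm hPmD) ![x, y, z] 0 1 2 (by decide) (by decide) (by decide)
      hPm1 hPm2
  have hTMRy : ∀ j k, Stmt18Aux.mkP 1 0 2 j k = true ↔ Ry (![x, y, z] j) (![x, y, z] k) :=
    Stmt18Aux.tblEquiv (hDm Ry hRyD) ![x, y, z] 1 0 2 (by decide) (by decide) (by decide)
      hRyyx hRyxz
  rcases trichotomous_of Sc a b with hcase | heq | hcase
  · -- Sc ranks a above b
    have hTWSc : ∀ j k, Stmt18Aux.mkP 2 0 1 j k = true ↔ Sc (![a, b, c] j) (![a, b, c] k) :=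
      Stmt18Aux.tblEquiv (hDw Sc hScD) ![a, b, c] 2 0 1 (by decide) (by decide) (by decide)
        hScca hcase
    exact Stmt18Aux.main_bridge Dm Dw φ hφs hφsp ![a, b, c] ![x, y, z] hu hv π hπ
      Fm hFmD hFmT Fw hFwD hFwT
      ![Stmt18Aux.mkP 0 1 2, Stmt18Aux.mkP 0 1 2, Stmt18Aux.mkP 1 0 2]
      ![Stmt18Aux.mkP 2 0 1, Stmt18Aux.mkP 0 2 1, Stmt18Aux.mkP 0 1 2]
      (Stmt18Aux.mkP 0 2 1) (Stmt18Aux.mkP 0 1 2)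
      ![Pm, Pm, Ry] ![Sc, Pw', Pw]
      (by intro i; fin_cases i <;> assumption)
      (by intro j; fin_cases j <;> assumption)
      Pm' hPm'D Pw hPwD
      (by intro i; fin_cases i; exacts [hTMPm, hTMPm, hTMRy])
      (by intro j; fin_cases j; exacts [hTWSc, hTWPw', hTWPw])
      hTMdev hTWPw Stmt18Aux.core0
  · exact absurd heq hab
  · -- Sc ranks b above a
    have hTWSb : ∀ j k, Stmt18Aux.mkP 1 0 2 j k = true ↔ Sb (![a, b, c] j) (![a, b, c] k) :=
      Stmt18Aux.tblEquiv (hDw Sb hSbD) ![a, b, c] 1 0 2 (by decide) (by decide) (by decide)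
        hSbba hSbac
    exact Stmt18Aux.main_bridge Dm Dw φ hφs hφsp ![a, b, c] ![x, y, z] hu hv π hπ
      Fm hFmD hFmT Fw hFwD hFwT
      ![Stmt18Aux.mkP 0 1 2, Stmt18Aux.mkP 1 0 2, Stmt18Aux.mkP 0 1 2]
      ![Stmt18Aux.mkP 1 0 2, Stmt18Aux.mkP 0 1 2, Stmt18Aux.mkP 0 1 2]
      (Stmt18Aux.mkP 0 2 1) (Stmt18Aux.mkP 0 2 1)
      ![Pm, Ry, Pm] ![Sb, Pw, Pw]
      (by intro i; fin_cases i <;> assumption)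
      (by intro j; fin_cases j <;> assumption)
      Pm' hPm'D Pw' hPw'D
      (by intro i; fin_cases i; exacts [hTMPm, hTMRy, hTMPm])
      (by intro j; fin_cases j; exacts [hTWSb, hTWPw, hTWPw])
      hTMdev hTWPw' Stmt18Aux.core1
end
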